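/- arXiv:2309.06785 — 3 statements merged into one kernel-verified Lean document; each statement's English description precedes it below -/
import Mathlib

section
/- A subgroup H of a Hausdorff topological group (G, γ) is a key subgroup if and only if for every coarser Hausdorff group topology γ₁ ⊆ γ on G, the equality γ₁|_H = γ|_H of subspace topologies on H implies the equality γ₁/H = γ/H of quotient topologies on G/H. -/
/-! Merson's lemma: a group topology is determined, among the group topologies coarser than it,
by the topologies it induces on `H` and on `G ⧸ H`. Given a `γ`-neighbourhood `U` of `1`, take a
`γ`-open `V ∋ 1` with `V * V ⊆ U`, a `γ₁`-open `P` with `P ∩ H = V ∩ H`, and a `γ₁`-open `Q ∋ 1`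
with `Q * Q ⊆ P`. The set `(V ∩ Q⁻¹) * H` is `γ`-open and `H`-saturated, hence `γ₁`-open, and
`Q ∩ ((V ∩ Q⁻¹) * H) ⊆ U`: if `v * h ∈ Q` with `v⁻¹ ∈ Q`, then `h ∈ Q * Q ∩ H ⊆ V`. -/

open Topology

/-- Subspace topology induced on a subgroup `H` by a topology `t` on `G`. -/
def subTop {G : Type*} [Group G] (t : TopologicalSpace G) (H : Subgroup G) :
    TopologicalSpace H :=
  t.induced ((↑) : H → G)

/-- Quotient topology on the coset space `G ⧸ H` induced by a topology `t` on `G`. -/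
def quotTop {G : Type*} [Group G] (t : TopologicalSpace G) (H : Subgroup G) :
    TopologicalSpace (G ⧸ H) :=
  t.coinduced (QuotientGroup.mk : G → G ⧸ H)

/-- `H` is a key subgroup of `(G, γ)`: every coarser Hausdorff group topology `γ₁`
(`γ ≤ γ₁` in Mathlib's order means `γ₁` is coarser than `γ`) inducing the original
subspace topology on `H` coincides with `γ`. -/
def IsKey {G : Type*} [Group G] (γ : TopologicalSpace G) (H : Subgroup G) : Prop :=
  ∀ γ₁ : TopologicalSpace G, γ ≤ γ₁ → @IsTopologicalGroup G γ₁ _ → @T2Space G γ₁ →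
    subTop γ₁ H = subTop γ H → γ₁ = γ

/-- `H` is a co-key subgroup of `(G, γ)`: every coarser Hausdorff group topology `γ₁`
inducing the original quotient topology on `G ⧸ H` coincides with `γ`. -/
def IsCoKey {G : Type*} [Group G] (γ : TopologicalSpace G) (H : Subgroup G) : Prop :=
  ∀ γ₁ : TopologicalSpace G, γ ≤ γ₁ → @IsTopologicalGroup G γ₁ _ → @T2Space G γ₁ →
    quotTop γ₁ H = quotTop γ H → γ₁ = γ

/-- `H` is relatively minimal in `(G, γ)`: every coarser Hausdorff group topology on `G`
induces the original subspace topology on `H`. -/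
def IsRelMin {G : Type*} [Group G] (γ : TopologicalSpace G) (H : Subgroup G) : Prop :=
  ∀ γ₁ : TopologicalSpace G, γ ≤ γ₁ → @IsTopologicalGroup G γ₁ _ → @T2Space G γ₁ →
    subTop γ₁ H = subTop γ H

/-- `H` is co-minimal in `(G, γ)`: every coarser Hausdorff group topology on `G`
induces the original quotient topology on the coset space `G ⧸ H`. -/
def IsCoMin {G : Type*} [Group G] (γ : TopologicalSpace G) (H : Subgroup G) : Prop :=
  ∀ γ₁ : TopologicalSpace G, γ ≤ γ₁ → @IsTopologicalGroup G γ₁ _ → @T2Space G γ₁ →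
    quotTop γ₁ H = quotTop γ H

/-- `(X, γ)` is a minimal topological group: no strictly coarser Hausdorff group topology. -/
def IsMinimalGroup {X : Type*} [Group X] (γ : TopologicalSpace X) : Prop :=
  ∀ γ₁ : TopologicalSpace X, γ ≤ γ₁ → @IsTopologicalGroup X γ₁ _ → @T2Space X γ₁ → γ₁ = γ

open Pointwise

section

variable {G : Type*} [Group G] {γ γ₁ : TopologicalSpace G} {H : Subgroup G}

lemma isOpen_mul_subgroup_of_quotTop_eq (hγ : @IsTopologicalGroup G γ _)
    (hquot : quotTop γ₁ H = quotTop γ H) {s : Set G} (hs : IsOpen[γ] s) :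
    IsOpen[γ₁] (s * H) := by
  have hopen : IsOpen[quotTop γ H] ((QuotientGroup.mk : G → G ⧸ H) '' s) :=
    letI := γ; QuotientGroup.isOpenMap_coe s hs
  rw [← hquot] at hopen
  rw [← QuotientGroup.preimage_image_mk_eq_mul]
  exact hopen

lemma exists_isOpen_preimage_coe_eq_of_subTop_eq (hsub : subTop γ₁ H = subTop γ H)
    {s : Set G} (hs : IsOpen[γ] s) :
    ∃ t, IsOpen[γ₁] t ∧ ((↑) : H → G) ⁻¹' t = (↑) ⁻¹' s := by
  have hopen : IsOpen[subTop γ H] (((↑) : H → G) ⁻¹' s) := ⟨s, hs, rfl⟩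
  rw [← hsub] at hopen
  exact hopen

theorem eq_of_subTop_eq_of_quotTop_eq (hγ : @IsTopologicalGroup G γ _)
    (hγ₁ : @IsTopologicalGroup G γ₁ _) (hle : γ ≤ γ₁) (hsub : subTop γ₁ H = subTop γ H)
    (hquot : quotTop γ₁ H = quotTop γ H) : γ₁ = γ := by
  refine IsTopologicalGroup.ext hγ₁ hγ (le_antisymm (fun U hU ↦ ?_) (nhds_mono hle))
  obtain ⟨V, hVo, hV1, hVU⟩ := letI := γ; exists_open_nhds_one_split hU
  obtain ⟨P, hPo, hPV⟩ := exists_isOpen_preimage_coe_eq_of_subTop_eq hsub hVo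
  have hP1 : (1 : G) ∈ P := (Set.ext_iff.mp hPV 1).mpr hV1
  obtain ⟨Q, hQo, hQ1, hQP⟩ := letI := γ₁; exists_open_nhds_one_split (hPo.mem_nhds hP1)
  have hQinv : IsOpen[γ₁] Q⁻¹ := letI := γ₁; hQo.inv
  have hVQ : IsOpen[γ] (V ∩ Q⁻¹) := letI := γ; hVo.inter (hQinv.mono hle)
  have hS : IsOpen[γ₁] ((V ∩ Q⁻¹) * H) := isOpen_mul_subgroup_of_quotTop_eq hγ hquot hVQ
  have hWU : Q ∩ ((V ∩ Q⁻¹) * H) ⊆ U := by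
    rintro _ ⟨hxQ, v, ⟨hvV, hvQ⟩, h, hh, rfl⟩
    have hhP : h ∈ P := by simpa using hQP _ hvQ _ hxQ
    have hhV : h ∈ V := (Set.ext_iff.mp hPV ⟨h, hh⟩).mp hhP
    exact hVU v hvV h hhV
  have h1S : (1 : G) ∈ (V ∩ Q⁻¹) * H := ⟨1, ⟨hV1, by simpa using hQ1⟩, 1, H.one_mem, mul_one 1⟩
  exact Filter.mem_of_superset (letI := γ₁; (hQo.inter hS).mem_nhds ⟨hQ1, h1S⟩) hWU

end

theorem isKey_iff_subspace_implies_quotient_general {G : Type*} [Group G] (γ : TopologicalSpace G)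
    (hγ : @IsTopologicalGroup G γ _) (H : Subgroup G) :
    IsKey γ H ↔
      ∀ γ₁ : TopologicalSpace G, γ ≤ γ₁ → @IsTopologicalGroup G γ₁ _ → @T2Space G γ₁ →
        subTop γ₁ H = subTop γ H → quotTop γ₁ H = quotTop γ H := by
  constructor
  · intro hkey γ₁ hle hγ₁ hT2₁ hsub
    rw [hkey γ₁ hle hγ₁ hT2₁ hsub]
  · intro hquot γ₁ hle hγ₁ hT2₁ hsub
    exact eq_of_subTop_eq_of_quotTop_eq hγ hγ₁ hle hsub (hquot γ₁ hle hγ₁ hT2₁ hsub)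

/-- `H` is a key subgroup of `(G, γ)` iff for every coarser Hausdorff group topology `γ₁`,
equality of the subspace topologies on `H` implies equality of the quotient topologies
on `G ⧸ H`. -/
theorem isKey_iff_subspace_implies_quotient {G : Type*} [Group G] (γ : TopologicalSpace G)
    (hγ : @IsTopologicalGroup G γ _) (hT2 : @T2Space G γ) (H : Subgroup G) :
    IsKey γ H ↔
      ∀ γ₁ : TopologicalSpace G, γ ≤ γ₁ → @IsTopologicalGroup G γ₁ _ → @T2Space G γ₁ →
        subTop γ₁ H = subTop γ H → quotTop γ₁ H = quotTop γ H :=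
  isKey_iff_subspace_implies_quotient_general γ hγ H
end

section
/- A Hausdorff topological group G is minimal if and only if it contains a normal subgroup that is simultaneously a key subgroup and a co-key subgroup of G. -/
/-!
Minimality gives the key and co-key properties for `⊥`. Conversely, let `H` be normal, key and
co-key, and let `γ₁` be a coarser Hausdorff group topology. Then `γ₁ ⊓ (pullback of γ/H)` is a
Hausdorff group topology between `γ` and `γ₁`, inducing `γ/H` on the quotient and the same
topology as `γ₁` on `H` (the pullback is indiscrete on `H`). Co-key makes it equal to `γ`, so
`γ₁|_H = γ|_H`, and key gives `γ₁ = γ`.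
-/

open Topology

section

variable {G : Type*} [Group G]

lemma subTop_inf_induced_mk (t : TopologicalSpace G) (H : Subgroup G)
    (s : TopologicalSpace (G ⧸ H)) :
    subTop (t ⊓ s.induced QuotientGroup.mk) H = subTop t H := by
  have hconst : (QuotientGroup.mk : G → G ⧸ H) ∘ ((↑) : H → G) = fun _ => ((1 : G) : G ⧸ H) := by
    funext x
    exact QuotientGroup.eq.2 (by simp)
  simp only [subTop, induced_inf, induced_compose, hconst, induced_const, inf_top_eq]

lemma quotTop_inf_induced_quotTop {γ t : TopologicalSpace G} (H : Subgroup G) (hle : γ ≤ t) :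
    quotTop (t ⊓ (quotTop γ H).induced QuotientGroup.mk) H = quotTop γ H :=
  le_antisymm ((coinduced_mono inf_le_right).trans (coinduced_le_iff_le_induced.2 le_rfl))
    (coinduced_mono (le_inf hle (coinduced_le_iff_le_induced.1 le_rfl)))

lemma isTopologicalGroup_induced_quotTop {γ : TopologicalSpace G} (hγ : @IsTopologicalGroup G γ _)
    (H : Subgroup G) [H.Normal] :
    @IsTopologicalGroup G ((quotTop γ H).induced QuotientGroup.mk) _ := by
  let _ := γ
  have : @IsTopologicalGroup (G ⧸ H) (quotTop γ H) _ := QuotientGroup.instIsTopologicalGroup H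
  let _ : TopologicalSpace (G ⧸ H) := quotTop γ H
  exact topologicalGroup_induced (QuotientGroup.mk' H)

lemma IsCoKey.isRelMin {γ : TopologicalSpace G} (hγ : @IsTopologicalGroup G γ _)
    {H : Subgroup G} [H.Normal] (hH : IsCoKey γ H) : IsRelMin γ H := by
  intro γ₁ hle hg₁ h2₁
  have hγ₂ : γ₁ ⊓ (quotTop γ H).induced QuotientGroup.mk = γ :=
    hH _ (le_inf hle (coinduced_le_iff_le_induced.1 le_rfl))
      (topologicalGroup_inf hg₁ (isTopologicalGroup_induced_quotTop hγ H))
      (t2Space_antitone inf_le_left h2₁) (quotTop_inf_induced_quotTop H hle)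
  rw [← subTop_inf_induced_mk γ₁ H (quotTop γ H), hγ₂]

lemma IsKey.isMinimalGroup {γ : TopologicalSpace G} {H : Subgroup G} (hK : IsKey γ H)
    (hR : IsRelMin γ H) : IsMinimalGroup γ :=
  fun γ₁ hle hg₁ h2₁ => hK γ₁ hle hg₁ h2₁ (hR γ₁ hle hg₁ h2₁)

lemma IsMinimalGroup.isKey {γ : TopologicalSpace G} (hγ : IsMinimalGroup γ) (H : Subgroup G) :
    IsKey γ H :=
  fun γ₁ hle hg₁ h2₁ _ => hγ γ₁ hle hg₁ h2₁

lemma IsMinimalGroup.isCoKey {γ : TopologicalSpace G} (hγ : IsMinimalGroup γ) (H : Subgroup G) :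
    IsCoKey γ H :=
  fun γ₁ hle hg₁ h2₁ _ => hγ γ₁ hle hg₁ h2₁

end

theorem minimal_iff_exists_normal_key_coKey_general {G : Type*} [Group G] (γ : TopologicalSpace G)
    (hγ : @IsTopologicalGroup G γ _) :
    IsMinimalGroup γ ↔
      ∃ H : Subgroup G, H.Normal ∧ IsKey γ H ∧ IsCoKey γ H := by
  constructor
  · intro hmin
    exact ⟨⊥, inferInstance, hmin.isKey ⊥, hmin.isCoKey ⊥⟩
  · rintro ⟨H, hN, hK, hCK⟩
    exact hK.isMinimalGroup (hCK.isRelMin hγ)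

/-- `G` is minimal iff it contains a normal subgroup which is simultaneously key and
co-key. -/
theorem minimal_iff_exists_normal_key_coKey {G : Type*} [Group G] (γ : TopologicalSpace G)
    (hγ : @IsTopologicalGroup G γ _) (hT2 : @T2Space G γ) :
    IsMinimalGroup γ ↔
      ∃ H : Subgroup G, H.Normal ∧ IsKey γ H ∧ IsCoKey γ H :=
  minimal_iff_exists_normal_key_coKey_general γ hγ
end

section
/- Every co-minimal subgroup H of a Hausdorff topological group (G, γ) is inj-key: for any two coarser Hausdorff group topologies γ₁, γ₂ ⊆ γ on G, if γ₁|_H = γ₂|_H then γ₁ = γ₂. -/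
/-!
The infimum `η = γ₁ ⊓ γ₂` in Mathlib's order (the supremum of the two topologies) is again a
Hausdorff group topology coarser than `γ`, and it induces on `H` the common topology
`γ₁|_H = γ₂|_H`. By co-minimality `γ₁`, `γ₂` and `η` all induce `γ/H` on `G ⧸ H`. Merson's lemma
(a group topology finer than another one and agreeing with it both on `H` and on `G ⧸ H` is equal
to it) then gives `η = γ₁` and `η = γ₂`.
-/

open Topology

open scoped Pointwise

section Merson

variable {G : Type*} [Group G] {H : Subgroup G}

lemma mem_mul_of_mk_mem_image_inter_inv {V W O : Set G} (hWO : W * W ⊆ O)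
    (hOV : (H : Set G) ∩ O ⊆ V) {x : G} (hxW : x ∈ W)
    (hx : (x : G ⧸ H) ∈ ((↑) : G → G ⧸ H) '' (V ∩ W⁻¹)) : x ∈ V * V := by
  obtain ⟨v, ⟨hvV, hvW⟩, hvx⟩ := hx
  have hH : v⁻¹ * x ∈ H := QuotientGroup.eq.mp hvx
  have hO : v⁻¹ * x ∈ O := hWO (Set.mul_mem_mul hvW hxW)
  exact ⟨v, hvV, v⁻¹ * x, hOV ⟨hH, hO⟩, mul_inv_cancel_left v x⟩

theorem eq_of_le_of_subTop_eq_of_quotTop_eq {σ τ : TopologicalSpace G} (hle : τ ≤ σ)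
    (hσ : @IsTopologicalGroup G σ _) (hτ : @IsTopologicalGroup G τ _)
    (hsub : subTop τ H = subTop σ H) (hquot : quotTop τ H = quotTop σ H) : τ = σ := by
  let _ := σ
  refine hτ.ext hσ (le_antisymm (nhds_mono hle) fun U hU => ?_)
  obtain ⟨V, hVopen, hV1, hVU⟩ :=
    @exists_open_nhds_one_mul_subset G τ _ hτ.toContinuousMul U hU
  obtain ⟨O, hOopen, hOV⟩ : ∃ O : Set G, IsOpen O ∧
      ((↑) : H → G) ⁻¹' O = (↑) ⁻¹' V := by
    rw [← isOpen_induced_iff, ← subTop, ← hsub]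
    exact ⟨V, hVopen, rfl⟩
  have hO1 : (1 : G) ∈ O := congrArg (⟨1, H.one_mem⟩ ∈ ·) hOV |>.mpr hV1
  obtain ⟨W, hWopen, hW1, hWO⟩ := exists_open_nhds_one_mul_subset (hOopen.mem_nhds hO1)
  have himage : IsOpen[quotTop τ H] (((↑) : G → G ⧸ H) '' (V ∩ W⁻¹)) :=
    @QuotientGroup.isOpenMap_coe G τ _ _ H _ (@IsOpen.inter G τ _ _ hVopen (hle _ hWopen.inv))
  rw [hquot] at himage
  have hW1' : (1 : G) ∈ W⁻¹ := by simpa using hW1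
  refine Filter.mem_of_superset ((hWopen.inter himage).mem_nhds ⟨hW1, 1, ⟨hV1, hW1'⟩, rfl⟩) ?_
  rintro x ⟨hxW, hx⟩
  refine hVU (mem_mul_of_mk_mem_image_inter_inv hWO ?_ hxW hx)
  rintro h ⟨hH, hO⟩
  exact congrArg (⟨h, hH⟩ ∈ ·) hOV |>.mp hO

end Merson

lemma subTop_inf {G : Type*} [Group G] (t₁ t₂ : TopologicalSpace G) (H : Subgroup G) :
    subTop (t₁ ⊓ t₂) H = subTop t₁ H ⊓ subTop t₂ H :=
  induced_inf

theorem IsCoMin.eq_of_le_of_subTop_eq {G : Type*} [Group G] {γ σ τ : TopologicalSpace G}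
    {H : Subgroup G} (hco : IsCoMin γ H) (hγτ : γ ≤ τ) (hτσ : τ ≤ σ)
    (hσ : @IsTopologicalGroup G σ _) (hτ : @IsTopologicalGroup G τ _) (hσT2 : @T2Space G σ)
    (hsub : subTop τ H = subTop σ H) : τ = σ :=
  eq_of_le_of_subTop_eq_of_quotTop_eq hτσ hσ hτ hsub <|
    (hco τ hγτ hτ (t2Space_antitone hτσ hσT2)).trans (hco σ (hγτ.trans hτσ) hσ hσT2).symm

theorem injKey_of_isCoMin_general {G : Type*} [Group G] (γ : TopologicalSpace G)
    (H : Subgroup G) (hco : IsCoMin γ H) :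
    ∀ γ₁ γ₂ : TopologicalSpace G, γ ≤ γ₁ → γ ≤ γ₂ →
      @IsTopologicalGroup G γ₁ _ → @IsTopologicalGroup G γ₂ _ →
      @T2Space G γ₁ → @T2Space G γ₂ →
      subTop γ₁ H = subTop γ₂ H → γ₁ = γ₂ := by
  intro γ₁ γ₂ h₁ h₂ hg₁ hg₂ ht₁ ht₂ hsub
  have hg : @IsTopologicalGroup G (γ₁ ⊓ γ₂) _ := topologicalGroup_inf hg₁ hg₂
  have hsub_inf : subTop (γ₁ ⊓ γ₂) H = subTop γ₁ H := by
    rw [subTop_inf, hsub, inf_idem]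
  calc γ₁ = γ₁ ⊓ γ₂ :=
        (hco.eq_of_le_of_subTop_eq (le_inf h₁ h₂) inf_le_left hg₁ hg ht₁ hsub_inf).symm
    _ = γ₂ :=
        hco.eq_of_le_of_subTop_eq (le_inf h₁ h₂) inf_le_right hg₂ hg ht₂ (hsub_inf.trans hsub)

/-- Every co-minimal subgroup is inj-key: two coarser Hausdorff group topologies agreeing
on `H` coincide. -/
theorem injKey_of_isCoMin {G : Type*} [Group G] (γ : TopologicalSpace G)
    (hγ : @IsTopologicalGroup G γ _) (hT2 : @T2Space G γ)
    (H : Subgroup G) (hco : IsCoMin γ H) :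
    ∀ γ₁ γ₂ : TopologicalSpace G, γ ≤ γ₁ → γ ≤ γ₂ →
      @IsTopologicalGroup G γ₁ _ → @IsTopologicalGroup G γ₂ _ →
      @T2Space G γ₁ → @T2Space G γ₂ →
      subTop γ₁ H = subTop γ₂ H → γ₁ = γ₂ :=
  injKey_of_isCoMin_general γ H hco
end
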